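/- arXiv:1007.4823 — 2 statements merged into one kernel-verified Lean document; each statement's English description precedes it below -/
import Mathlib

section
/- Let Γ be a discrete subgroup of SL(2,ℝ), ξ ∈ ℤ, m ≥ 0, and F(z,X) = Σ_{r=0}^m f_r(z) X^r ∈ 𝓕_m[X]. Then F is a quasimodular polynomial belonging to QP^m_ξ(Γ) if and only if for every r ∈ {0,1,…,m} the coefficient f_r satisfies (f_r |_{ξ−2r} γ)(z) = Σ_{ℓ=r}^m C(ℓ,r) f_ℓ(z) 𝔎(γ,z)^{ℓ−r} for all z ∈ ℍ and γ ∈ Γ (C(ℓ,r) being a binomial coefficient). In particular, if F ∈ QP^m_ξ(Γ) then each f_r is a quasimodular form belonging to QM^{m−r}_{ξ−2r}(Γ). -/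
noncomputable section

open Complex Polynomial

/-- The upper half plane `ℍ`, as a subset of `ℂ`. -/
def UHP : Set ℂ := {z : ℂ | 0 < z.im}

/-- `SL(2, ℝ)`. -/
abbrev SL2R := Matrix.SpecialLinearGroup (Fin 2) ℝ

/-- `GL⁺(2, ℝ)`, the group of real 2×2 matrices of positive determinant. -/
abbrev GL2P := Matrix.GLPos (Fin 2) ℝ

/-- Topology on `SL(2,ℝ)` induced from the space of matrices (used to speak of
discrete subgroups of `SL(2,ℝ)`). -/
instance : TopologicalSpace SL2R :=
  TopologicalSpace.induced (fun g : SL2R => (g : Matrix (Fin 2) (Fin 2) ℝ)) inferInstance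

/-- A function belongs to `𝓕` if it is holomorphic on the upper half plane. -/
def Hol (f : ℂ → ℂ) : Prop := DifferentiableOn ℂ f UHP

/-- `𝔍(γ, z) = cz + d` for `γ ∈ SL(2, ℝ)`. -/
def jJ (γ : SL2R) (z : ℂ) : ℂ := (γ 1 0 : ℝ) * z + (γ 1 1 : ℝ)

/-- `𝔎(γ, z) = c/(cz + d)` for `γ ∈ SL(2, ℝ)`. -/
def kK (γ : SL2R) (z : ℂ) : ℂ := (γ 1 0 : ℝ) / jJ γ z

/-- `γ z = (az+b)/(cz+d)` for `γ ∈ SL(2, ℝ)`. -/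
def mact (γ : SL2R) (z : ℂ) : ℂ := ((γ 0 0 : ℝ) * z + (γ 0 1 : ℝ)) / jJ γ z

/-- The underlying real matrix of an element of `GL⁺(2, ℝ)`. -/
def gmat (α : GL2P) : Matrix (Fin 2) (Fin 2) ℝ :=
  ((α : Matrix.GeneralLinearGroup (Fin 2) ℝ) : Matrix (Fin 2) (Fin 2) ℝ)

/-- The determinant of an element of `GL⁺(2, ℝ)`. -/
def gdet (α : GL2P) : ℝ := (gmat α).det

/-- `𝔍(α, z) = cz + d` for `α ∈ GL⁺(2, ℝ)`. -/
def gJ (α : GL2P) (z : ℂ) : ℂ := (gmat α 1 0 : ℝ) * z + (gmat α 1 1 : ℝ)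

/-- `𝔎(α, z) = c/(cz + d)` for `α ∈ GL⁺(2, ℝ)`. -/
def gK (α : GL2P) (z : ℂ) : ℂ := (gmat α 1 0 : ℝ) / gJ α z

/-- `α z = (az+b)/(cz+d)` for `α ∈ GL⁺(2, ℝ)`. -/
def gact (α : GL2P) (z : ℂ) : ℂ := ((gmat α 0 0 : ℝ) * z + (gmat α 0 1 : ℝ)) / gJ α z

/-- `(det α)^(μ/2)` for `α ∈ GL⁺(2, ℝ)` and `μ ∈ ℤ`. -/
def detpow (α : GL2P) (μ : ℤ) : ℂ := ((gdet α ^ ((μ : ℝ) / 2) : ℝ) : ℂ)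

/-- The weight-`ξ` action `F ∥_ξ γ` of `SL(2,ℝ)` on polynomials over `𝓕`:
`(F ∥_ξ γ)(z, X) = 𝔍(γ,z)^(-ξ) F(γz, 𝔍(γ,z)^2 (X - 𝔎(γ,z)))`. -/
def polyAct (ξ : ℤ) (F : ℂ → Polynomial ℂ) (γ : SL2R) : ℂ → Polynomial ℂ := fun z =>
  Polynomial.C (jJ γ z ^ (-ξ)) *
    (F (mact γ z)).comp (Polynomial.C (jJ γ z ^ 2) * (Polynomial.X - Polynomial.C (kK γ z)))

/-- The weight-`ξ` action `F ∥_ξ α` of `GL⁺(2,ℝ)` on polynomials over `𝓕`: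
`(F ∥_ξ α)(z, X) = (det α)^(ξ/2) 𝔍(α,z)^(-ξ) F(αz, (det α)⁻¹ 𝔍(α,z)^2 (X - 𝔎(α,z)))`. -/
def polyActG (ξ : ℤ) (F : ℂ → Polynomial ℂ) (α : GL2P) : ℂ → Polynomial ℂ := fun z =>
  Polynomial.C (detpow α ξ * gJ α z ^ (-ξ)) *
    (F (gact α z)).comp
      (Polynomial.C ((gdet α : ℂ)⁻¹ * gJ α z ^ 2) * (Polynomial.X - Polynomial.C (gK α z)))

/-- The weight-`l` action `Φ |^J_l γ` of `SL(2,ℝ)` on formal power series over `𝓕`: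
`(Φ |^J_l γ)(z, X) = 𝔍(γ,z)^(-l) e^(-𝔎(γ,z) X) Φ(γz, 𝔍(γ,z)^(-2) X)`. -/
def psAct (l : ℤ) (Φ : ℂ → PowerSeries ℂ) (γ : SL2R) : ℂ → PowerSeries ℂ := fun z =>
  PowerSeries.C (R := ℂ) (jJ γ z ^ (-l)) *
    (PowerSeries.mk fun n => (-(kK γ z)) ^ n / (n.factorial : ℂ)) *
    PowerSeries.rescale (jJ γ z ^ (-2 : ℤ)) (Φ (mact γ z))

/-- The weight-`l` action `Φ |^J_l α` of `GL⁺(2,ℝ)` on formal power series over `𝓕`: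
`(Φ |^J_l α)(z, X) = (det α)^(l/2) 𝔍(α,z)^(-l) e^(-𝔎(α,z) X) Φ(αz, (det α) 𝔍(α,z)^(-2) X)`. -/
def psActG (l : ℤ) (Φ : ℂ → PowerSeries ℂ) (α : GL2P) : ℂ → PowerSeries ℂ := fun z =>
  PowerSeries.C (R := ℂ) (detpow α l * gJ α z ^ (-l)) *
    (PowerSeries.mk fun n => (-(gK α z)) ^ n / (n.factorial : ℂ)) *
    PowerSeries.rescale ((gdet α : ℂ) * gJ α z ^ (-2 : ℤ)) (Φ (gact α z))

/-- The map `Π^δ_m`: for `Φ(z,X) = Σ_k φ_k(z) X^(k+δ)`,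
`(Π^δ_m Φ)(z, X) = Σ_{r=0}^m (1/r!) φ_(m-r)(z) X^r`. -/
def PiDM (δ m : ℕ) (Φ : ℂ → PowerSeries ℂ) : ℂ → Polynomial ℂ := fun z =>
  ∑ r ∈ Finset.range (m + 1),
    Polynomial.C ((PowerSeries.coeff (R := ℂ) (m - r + δ) (Φ z)) / (r.factorial : ℂ)) *
      Polynomial.X ^ r

/-- Membership in `𝓕_m[X]`: degree at most `m` and holomorphic coefficients. -/
def InFmX (m : ℕ) (F : ℂ → Polynomial ℂ) : Prop :=
  (∀ z : ℂ, (F z).degree ≤ (m : WithBot ℕ)) ∧ ∀ r : ℕ, Hol fun z => (F z).coeff r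

/-- Membership in `𝓕[[X]]_δ = X^δ 𝓕[[X]]` with holomorphic coefficients. -/
def InFXd (δ : ℕ) (Φ : ℂ → PowerSeries ℂ) : Prop :=
  (∀ z : ℂ, ∀ k < δ, PowerSeries.coeff (R := ℂ) k (Φ z) = 0) ∧
    ∀ k : ℕ, Hol fun z => PowerSeries.coeff (R := ℂ) k (Φ z)

/-- `QP^m_ξ(Γ)`: quasimodular polynomials of weight `ξ` and degree at most `m` for `Γ`. -/
def IsQP (Γ : Subgroup SL2R) (ξ : ℤ) (m : ℕ) (F : ℂ → Polynomial ℂ) : Prop :=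
  InFmX m F ∧ ∀ γ ∈ Γ, ∀ z ∈ UHP, polyAct ξ F γ z = F z

/-- `J_l(Γ)_δ`: Jacobi-like forms of weight `l` for `Γ` lying in `𝓕[[X]]_δ`. -/
def IsJF (Γ : Subgroup SL2R) (l : ℤ) (δ : ℕ) (Φ : ℂ → PowerSeries ℂ) : Prop :=
  InFXd δ Φ ∧ ∀ γ ∈ Γ, ∀ z ∈ UHP, psAct l Φ γ z = Φ z

/-- `M_μ(Γ)`: modular forms of weight `μ` for `Γ` (cusp conditions suppressed). -/
def IsModular (Γ : Subgroup SL2R) (μ : ℤ) (f : ℂ → ℂ) : Prop :=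
  Hol f ∧ ∀ γ ∈ Γ, ∀ z ∈ UHP, jJ γ z ^ (-μ) * f (mact γ z) = f z

/-- `QM^m_ξ(Γ)`: quasimodular forms of weight `ξ` and depth at most `m` for `Γ`. -/
def IsQM (Γ : Subgroup SL2R) (ξ : ℤ) (m : ℕ) (f : ℂ → ℂ) : Prop :=
  Hol f ∧ ∃ g : ℕ → ℂ → ℂ, (∀ r, Hol (g r)) ∧
    ∀ γ ∈ Γ, ∀ z ∈ UHP,
      jJ γ z ^ (-ξ) * f (mact γ z) = ∑ r ∈ Finset.range (m + 1), g r z * kK γ z ^ r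

/-- The factorial `t!` of an integer `t` (equal to `(t.toNat)!`; intended for `t ≥ 0`). -/
def zfact (t : ℤ) : ℂ := (t.toNat.factorial : ℂ)

/-!
Substituting `X ↦ X + 𝔎(γ,z)` undoes the translation in the action, so `F ‖_ξ γ = F` at `z`
is equivalent to `𝔍(γ,z)^(-ξ) F(γz, 𝔍(γ,z)^2 X) = F(z, X + 𝔎(γ,z))`. Comparing coefficients
of `X^r` by the binomial theorem gives the stated identities, and the `r`-th identity,
reindexed by `ℓ = r + j`, exhibits `f_r` as a quasimodular form of weight `ξ - 2r` and
depth `m - r`.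
-/

open Finset

namespace Polynomial

variable {R : Type*} [CommRing R]

theorem comp_X_sub_C_eq_iff {p q : R[X]} (k : R) :
    p.comp (X - C k) = q ↔ p = q.comp (X + C k) := by
  constructor <;> rintro rfl <;> simp [comp_assoc]

theorem coeff_comp_X_add_C {p : R[X]} {m : ℕ} (hp : p.natDegree ≤ m) (k : R) (r : ℕ) :
    (p.comp (X + C k)).coeff r = ∑ ℓ ∈ Icc r m, (ℓ.choose r : R) * p.coeff ℓ * k ^ (ℓ - r) := by
  have hsub : Icc r m ⊆ range (m + 1) := fun ℓ hℓ => by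
    simp only [mem_Icc, mem_range] at hℓ ⊢; omega
  rw [comp, eval₂_eq_sum_range' C (Nat.lt_succ_of_le hp), finsetSum_coeff,
    ← sum_subset hsub fun ℓ hℓm hℓ => ?_]
  · refine sum_congr rfl fun ℓ _ => ?_
    rw [coeff_C_mul, coeff_X_add_C_pow]
    ring
  · have : ℓ < r := by simp only [mem_Icc, mem_range] at hℓ hℓm; omega
    simp [coeff_X_add_C_pow, Nat.choose_eq_zero_of_lt this]

theorem C_zpow_mul_comp_eq_iff {K : Type*} [Field K] {P Q : K[X]} {m : ℕ}
    (hP : P.natDegree ≤ m) (hQ : Q.natDegree ≤ m) {a : K} (ha : a ≠ 0) (ξ : ℤ) (k : K) :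
    C (a ^ (-ξ)) * P.comp (C (a ^ 2) * (X - C k)) = Q ↔
      ∀ r ≤ m, a ^ (-(ξ - 2 * (r : ℤ))) * P.coeff r =
        ∑ ℓ ∈ Icc r m, (ℓ.choose r : K) * Q.coeff ℓ * k ^ (ℓ - r) := by
  have hcomp : C (a ^ (-ξ)) * P.comp (C (a ^ 2) * (X - C k)) =
      (C (a ^ (-ξ)) * P.comp (C (a ^ 2) * X)).comp (X - C k) := by
    simp [mul_comp, comp_assoc]
  have hdegL : (C (a ^ (-ξ)) * P.comp (C (a ^ 2) * X)).natDegree ≤ m := by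
    refine (natDegree_C_mul_le _ _).trans (natDegree_comp_le.trans ?_)
    rwa [natDegree_C_mul_X _ (pow_ne_zero 2 ha), mul_one]
  have hdegR : (Q.comp (X + C k)).natDegree ≤ m := by
    simpa [natDegree_comp] using hQ
  rw [hcomp, comp_X_sub_C_eq_iff, ext_iff_natDegree_le hdegL hdegR]
  refine forall₂_congr fun r _ => ?_
  rw [coeff_C_mul, comp_C_mul_X_coeff, coeff_comp_X_add_C hQ,
    show -(ξ - 2 * r) = -ξ + ((2 * r : ℕ) : ℤ) by push_cast; ring, zpow_add₀ ha, zpow_natCast,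
    pow_mul, mul_right_comm, mul_assoc]

end Polynomial

lemma jJ_ne_zero (γ : SL2R) {z : ℂ} (hz : z ∈ UHP) : jJ γ z ≠ 0 := by
  simpa [UpperHalfPlane.denom, jJ] using
    UpperHalfPlane.denom_ne_zero_of_im (Matrix.SpecialLinearGroup.toGL γ) hz.ne'

lemma polyAct_eq_iff (ξ : ℤ) {m : ℕ} {F : ℂ → ℂ[X]} (hF : ∀ z, (F z).natDegree ≤ m)
    (γ : SL2R) {z : ℂ} (hz : z ∈ UHP) :
    polyAct ξ F γ z = F z ↔ ∀ r ≤ m,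
      jJ γ z ^ (-(ξ - 2 * (r : ℤ))) * (F (mact γ z)).coeff r =
        ∑ ℓ ∈ Icc r m, (ℓ.choose r : ℂ) * (F z).coeff ℓ * kK γ z ^ (ℓ - r) :=
  C_zpow_mul_comp_eq_iff (hF _) (hF z) (jJ_ne_zero γ hz) ξ (kK γ z)

lemma sum_Icc_eq_sum_range_add {M : Type*} [AddCommMonoid M] (f : ℕ → M) {r m : ℕ}
    (hr : r ≤ m) : ∑ ℓ ∈ Icc r m, f ℓ = ∑ j ∈ range (m - r + 1), f (r + j) := by
  rw [← Ico_add_one_right_eq_Icc, sum_Ico_eq_sum_range, Nat.sub_add_comm hr]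

theorem stmt5_general (Γ : Subgroup SL2R) (ξ : ℤ) (m : ℕ)
    (F : ℂ → Polynomial ℂ) (hF : InFmX m F) :
    ((∀ γ ∈ Γ, ∀ z ∈ UHP, polyAct ξ F γ z = F z) ↔
      ∀ r ≤ m, ∀ γ ∈ Γ, ∀ z ∈ UHP,
        jJ γ z ^ (-(ξ - 2 * (r : ℤ))) * (F (mact γ z)).coeff r =
          ∑ ℓ ∈ Finset.Icc r m, (ℓ.choose r : ℂ) * (F z).coeff ℓ * kK γ z ^ (ℓ - r)) ∧
    ((∀ γ ∈ Γ, ∀ z ∈ UHP, polyAct ξ F γ z = F z) →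
      ∀ r ≤ m, IsQM Γ (ξ - 2 * (r : ℤ)) (m - r) fun z => (F z).coeff r) := by
  have hdeg : ∀ z, (F z).natDegree ≤ m := fun z => natDegree_le_of_degree_le (hF.1 z)
  have coeff_identities : (∀ γ ∈ Γ, ∀ z ∈ UHP, polyAct ξ F γ z = F z) ↔
      ∀ r ≤ m, ∀ γ ∈ Γ, ∀ z ∈ UHP,
        jJ γ z ^ (-(ξ - 2 * (r : ℤ))) * (F (mact γ z)).coeff r =
          ∑ ℓ ∈ Icc r m, (ℓ.choose r : ℂ) * (F z).coeff ℓ * kK γ z ^ (ℓ - r) :=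
    ⟨fun h r hr γ hγ z hz => (polyAct_eq_iff ξ hdeg γ hz).mp (h γ hγ z hz) r hr,
      fun h γ hγ z hz => (polyAct_eq_iff ξ hdeg γ hz).mpr fun r hr => h r hr γ hγ z hz⟩
  refine ⟨coeff_identities, fun hQP r hr => ⟨hF.2 r, ?_⟩⟩
  refine ⟨fun j z => ((r + j).choose r : ℂ) * (F z).coeff (r + j),
    fun j => (hF.2 (r + j)).const_mul _, fun γ hγ z hz => ?_⟩
  rw [coeff_identities.mp hQP r hr γ hγ z hz, sum_Icc_eq_sum_range_add _ hr]
  simp only [Nat.add_sub_cancel_left]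

theorem stmt5 (Γ : Subgroup SL2R) (hΓ : DiscreteTopology Γ) (ξ : ℤ) (m : ℕ)
    (F : ℂ → Polynomial ℂ) (hF : InFmX m F) :
    ((∀ γ ∈ Γ, ∀ z ∈ UHP, polyAct ξ F γ z = F z) ↔
      ∀ r ≤ m, ∀ γ ∈ Γ, ∀ z ∈ UHP,
        jJ γ z ^ (-(ξ - 2 * (r : ℤ))) * (F (mact γ z)).coeff r =
          ∑ ℓ ∈ Finset.Icc r m, (ℓ.choose r : ℂ) * (F z).coeff ℓ * kK γ z ^ (ℓ - r)) ∧
    ((∀ γ ∈ Γ, ∀ z ∈ UHP, polyAct ξ F γ z = F z) →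
      ∀ r ≤ m, IsQM Γ (ξ - 2 * (r : ℤ)) (m - r) fun z => (F z).coeff r) :=
  stmt5_general Γ ξ m F hF
end
end

section
/- Let ξ ∈ ℤ, m ≥ 0, α ∈ GL⁺(2,ℝ), and F(z,X) ∈ 𝓕_m[X]. Then the leading coefficient satisfies 𝔖_m(F ‖_ξ α) = (𝔖_m F) |_{ξ−2m} α. Consequently, if Γ is a discrete subgroup of SL(2,ℝ) and ΓαΓ = Γα_1 ⊔ … ⊔ Γα_s is a disjoint right-coset decomposition, then 𝔖_m(Σ_{i=1}^s F ‖_ξ α_i) = Σ_{i=1}^s (𝔖_m F) |_{ξ−2m} α_i, i.e. 𝔖_m intertwines the Hecke operator T^P_ξ(α) on quasimodular polynomials with the Hecke operator T_{ξ−2m}(α) on modular forms. -/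
noncomputable section

open Complex Polynomial

theorem Polynomial.coeff_comp_of_natDegree_le_one {R : Type*} [CommSemiring R] {p q : R[X]}
    {m : ℕ} (hp : p.natDegree ≤ m) (hq : q.natDegree ≤ 1) :
    (p.comp q).coeff m = p.coeff m * q.coeff 1 ^ m := by
  have hpow_low : ∀ k < m, (q ^ k).coeff m = 0 := fun k hk =>
    coeff_eq_zero_of_natDegree_lt <| natDegree_pow_le_of_le k hq |>.trans_lt (by omega)
  rw [comp_eq_sum_left, sum_over_range' p (fun _ => by simp) (m + 1) (by omega),
    finsetSum_coeff, Finset.sum_range_succ, Finset.sum_eq_zero fun k hk => by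
      rw [coeff_C_mul, hpow_low k (Finset.mem_range.mp hk), mul_zero],
    zero_add, coeff_C_mul, ← coeff_pow_of_natDegree_le hq, mul_one]

theorem Polynomial.coeff_comp_C_mul_X_sub_C {R : Type*} [CommRing R] {p : R[X]} {m : ℕ}
    (hp : p.natDegree ≤ m) (a b : R) :
    (p.comp (C a * (X - C b))).coeff m = p.coeff m * a ^ m := by
  rw [coeff_comp_of_natDegree_le_one hp]
  · simp
  · exact natDegree_C_mul_le a _ |>.trans (natDegree_X_sub_C_le b)

theorem gJ_ne_zero (α : GL2P) {z : ℂ} (hz : z ∈ UHP) : gJ α z ≠ 0 :=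
  UpperHalfPlane.denom_ne_zero_of_im _ (ne_of_gt hz)

theorem detpow_sub_two_mul (α : GL2P) (ξ : ℤ) (m : ℕ) :
    detpow α (ξ - 2 * m) = detpow α ξ * ((gdet α : ℂ))⁻¹ ^ m := by
  have hdet : 0 < gdet α := α.prop
  rw [detpow, detpow, show ((ξ - 2 * m : ℤ) : ℝ) / 2 = (ξ : ℝ) / 2 + -(m : ℝ) by push_cast; ring,
    Real.rpow_add hdet, Real.rpow_neg hdet.le, Real.rpow_natCast]
  push_cast
  ring

theorem gJ_zpow_neg_sub_two_mul (α : GL2P) {z : ℂ} (hz : z ∈ UHP) (ξ : ℤ) (m : ℕ) :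
    gJ α z ^ (-(ξ - 2 * (m : ℤ))) = gJ α z ^ (-ξ) * (gJ α z ^ 2) ^ m := by
  rw [show -(ξ - 2 * (m : ℤ)) = -ξ + ((2 * m : ℕ) : ℤ) by push_cast; ring,
    zpow_add₀ (gJ_ne_zero α hz), zpow_natCast, pow_mul]

theorem coeff_polyActG (ξ : ℤ) {m : ℕ} {F : ℂ → Polynomial ℂ} {α : GL2P} {z : ℂ}
    (hF : (F (gact α z)).natDegree ≤ m) (hz : z ∈ UHP) :
    (polyActG ξ F α z).coeff m =
      detpow α (ξ - 2 * m) * gJ α z ^ (-(ξ - 2 * (m : ℤ))) * (F (gact α z)).coeff m := by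
  rw [polyActG, coeff_C_mul, coeff_comp_C_mul_X_sub_C hF,
    detpow_sub_two_mul, gJ_zpow_neg_sub_two_mul α hz, mul_pow]
  ring

theorem stmt10_general (Γ : Subgroup SL2R) (ξ : ℤ) (m : ℕ)
    (F : ℂ → Polynomial ℂ) (hF : InFmX m F) :
    (∀ α : GL2P, ∀ z ∈ UHP,
      (polyActG ξ F α z).coeff m =
        detpow α (ξ - 2 * m) * gJ α z ^ (-(ξ - 2 * (m : ℤ))) * (F (gact α z)).coeff m) ∧
    (∀ (α : GL2P) (s : ℕ) (A : Fin s → GL2P),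
      (∀ i, ∃ γ₁ ∈ Γ, ∃ γ₂ ∈ Γ, A i = (γ₁ : GL2P) * α * (γ₂ : GL2P)) →
      (∀ γ₁ ∈ Γ, ∀ γ₂ ∈ Γ,
        ∃ i, ∃ γ ∈ Γ, (γ₁ : GL2P) * α * (γ₂ : GL2P) = (γ : GL2P) * A i) →
      (∀ i j : Fin s, (∃ γ ∈ Γ, A i = (γ : GL2P) * A j) → i = j) →
      ∀ z ∈ UHP,
        (∑ i, polyActG ξ F (A i) z).coeff m =
          ∑ i, detpow (A i) (ξ - 2 * m) * gJ (A i) z ^ (-(ξ - 2 * (m : ℤ))) *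
            (F (gact (A i) z)).coeff m) := by
  have hdeg : ∀ w, (F w).natDegree ≤ m := fun w => natDegree_le_iff_degree_le.mpr (hF.1 w)
  refine ⟨fun α z hz => coeff_polyActG ξ (hdeg _) hz, fun α s A _ _ _ z hz => ?_⟩
  rw [finsetSum_coeff]
  exact Finset.sum_congr rfl fun i _ => coeff_polyActG ξ (hdeg _) hz

theorem stmt10 (Γ : Subgroup SL2R) (hΓ : DiscreteTopology Γ) (ξ : ℤ) (m : ℕ)
    (F : ℂ → Polynomial ℂ) (hF : InFmX m F) :
    (∀ α : GL2P, ∀ z ∈ UHP,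
      (polyActG ξ F α z).coeff m =
        detpow α (ξ - 2 * m) * gJ α z ^ (-(ξ - 2 * (m : ℤ))) * (F (gact α z)).coeff m) ∧
    (∀ (α : GL2P) (s : ℕ) (A : Fin s → GL2P),
      (∀ i, ∃ γ₁ ∈ Γ, ∃ γ₂ ∈ Γ, A i = (γ₁ : GL2P) * α * (γ₂ : GL2P)) →
      (∀ γ₁ ∈ Γ, ∀ γ₂ ∈ Γ,
        ∃ i, ∃ γ ∈ Γ, (γ₁ : GL2P) * α * (γ₂ : GL2P) = (γ : GL2P) * A i) →
      (∀ i j : Fin s, (∃ γ ∈ Γ, A i = (γ : GL2P) * A j) → i = j) →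
      ∀ z ∈ UHP,
        (∑ i, polyActG ξ F (A i) z).coeff m =
          ∑ i, detpow (A i) (ξ - 2 * m) * gJ (A i) z ^ (-(ξ - 2 * (m : ℤ))) *
            (F (gact (A i) z)).coeff m) :=
  stmt10_general Γ ξ m F hF
end
end
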